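/- arXiv:1102.3167 — 2 statements merged into one kernel-verified Lean document; each statement's English description precedes it below -/
import Mathlib

section
/- Let P ∈ GL_n(F_q) be a matrix with irreducible characteristic polynomial, G = ⟨P⟩ the cyclic group it generates, and U ∈ G(k, F_q^n) a k-dimensional subspace such that distinct nonzero vectors of U lie in distinct G-orbits of F_q^n \ {0}. Then for any i with U P^i ≠ U, we have U ∩ U P^i = {0}; consequently the orbit code {U P^i : i} has minimum subspace distance 2k and cardinality equal to ord(P). -/
open Matrix

/-- If distinct nonzero vectors of `U` lie in distinct orbits of the irreducible
cyclic group `⟨P⟩`, then distinct codewords of the orbit code intersect trivially;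
hence the orbit code has minimum subspace distance `2k` and cardinality `ord(P)`. -/
theorem orbit_code_spread_like
    {K : Type*} [Field K] [Fintype K] (n k : ℕ) (hk : 0 < k)
    (P : Matrix (Fin n) (Fin n) K) (hPu : IsUnit P)
    (hP : Irreducible P.charpoly)
    (U : Submodule K (Fin n → K)) (hU : Module.finrank K U = k)
    (horb : ∀ v w : Fin n → K, v ∈ U → w ∈ U → v ≠ 0 → w ≠ 0 → v ≠ w →
      ∀ i : ℕ, Matrix.vecMul v (P ^ i) ≠ w) :
    (∀ i : ℕ, U.map (P ^ i).vecMulLinear ≠ U →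
      U ⊓ U.map (P ^ i).vecMulLinear = ⊥) ∧
    (∀ i : ℕ, U.map (P ^ i).vecMulLinear ≠ U →
      2 * (k - Module.finrank K ↥(U ⊓ U.map (P ^ i).vecMulLinear)) = 2 * k) ∧
    Nat.card {W : Submodule K (Fin n → K) | ∃ i : ℕ, W = U.map (P ^ i).vecMulLinear}
      = orderOf P := by
  classical
  -- a nonzero vector of U
  have hUbot : U ≠ ⊥ := by
    intro h
    rw [h, finrank_bot] at hU
    omega
  obtain ⟨v0, hv0U, hv00⟩ := (Submodule.ne_bot_iff U).mp hUbot
  -- vecMul by a unit has trivial kernel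
  have hker : ∀ (M : Matrix (Fin n) (Fin n) K), IsUnit M → ∀ v : Fin n → K,
      v ᵥ* M = 0 → v = 0 := by
    intro M hM v hv
    obtain ⟨u, rfl⟩ := hM
    have h2 := congrArg (fun z => z ᵥ* (↑u⁻¹ : Matrix (Fin n) (Fin n) K)) hv
    simp only [Matrix.vecMul_vecMul, Matrix.zero_vecMul] at h2
    rwa [Units.mul_inv, Matrix.vecMul_one] at h2
  have hinj : ∀ (M : Matrix (Fin n) (Fin n) K), IsUnit M →
      Function.Injective M.vecMulLinear := by
    intro M hM x y hxy
    simp only [Matrix.vecMulLinear_apply] at hxy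
    have h0 : (x - y) ᵥ* M = 0 := by
      rw [Matrix.sub_vecMul, hxy, sub_self]
    exact sub_eq_zero.mp (hker M hM _ h0)
  -- key: a nonzero vector of U mapped back into U forces P ^ d = 1
  have key : ∀ (d : ℕ) (v : Fin n → K), v ∈ U → v ≠ 0 → v ᵥ* (P ^ d) ∈ U →
      P ^ d = 1 := by
    intro d v hvU hv0 hvd
    have hne0 : v ᵥ* (P ^ d) ≠ 0 := fun h => hv0 (hker _ (hPu.pow d) v h)
    have hfix : v ᵥ* (P ^ d) = v := by
      by_contra hne
      exact horb v (v ᵥ* (P ^ d)) hvU hvd hv0 hne0 (Ne.symm hne) d rfl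
    by_cases hdvd : P.charpoly ∣ (Polynomial.X ^ d - 1 : Polynomial K)
    · obtain ⟨c, hc⟩ := hdvd
      have h0 : P ^ d - 1 = 0 := by
        calc P ^ d - 1 = Polynomial.aeval P (Polynomial.X ^ d - 1 : Polynomial K) := by
              simp
          _ = Polynomial.aeval P (P.charpoly * c) := by rw [← hc]
          _ = 0 := by rw [_root_.map_mul, Matrix.aeval_self_charpoly, zero_mul]
      exact sub_eq_zero.mp h0
    · have hcop : IsCoprime P.charpoly (Polynomial.X ^ d - 1 : Polynomial K) :=
        hP.coprime_iff_not_dvd.mpr hdvd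
      obtain ⟨a, b, hab⟩ := hcop
      have h1 : Polynomial.aeval P b * (P ^ d - 1) = 1 := by
        have := congrArg (Polynomial.aeval P) hab
        simpa [Matrix.aeval_self_charpoly] using this
      have hg : P ^ d - 1 = Polynomial.aeval P (Polynomial.X ^ d - 1 : Polynomial K) := by
        simp
      have h2 : (P ^ d - 1) * Polynomial.aeval P b = 1 := by
        rw [hg] at h1 ⊢
        rw [← _root_.map_mul, mul_comm, _root_.map_mul]
        exact h1
      have hunit : IsUnit (P ^ d - 1) :=
        ⟨⟨P ^ d - 1, Polynomial.aeval P b, h2, h1⟩, rfl⟩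
      exfalso
      apply hv0
      apply hker _ hunit
      rw [Matrix.vecMul_sub, hfix, Matrix.vecMul_one, sub_self]
  have hmap1 : U.map ((1 : Matrix (Fin n) (Fin n) K)).vecMulLinear = U := by
    ext y
    simp [Matrix.vecMulLinear_apply, Matrix.vecMul_one]
  -- part 1
  have part1 : ∀ i : ℕ, U.map (P ^ i).vecMulLinear ≠ U →
      U ⊓ U.map (P ^ i).vecMulLinear = ⊥ := by
    intro i hne
    by_contra hbot
    obtain ⟨x, hx, hx0⟩ := (Submodule.ne_bot_iff _).mp hbot
    obtain ⟨hxU, hxM⟩ := hx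
    obtain ⟨w, hwU, hwx⟩ := hxM
    have hw0 : w ≠ 0 := by
      rintro rfl
      apply hx0
      rw [← hwx]
      simp [Matrix.vecMulLinear_apply, Matrix.zero_vecMul]
    have h1 : P ^ i = 1 := key i w hwU hw0 (by
      have : w ᵥ* (P ^ i) = x := hwx
      rw [this]; exact hxU)
    rw [h1, hmap1] at hne
    exact hne rfl
  -- order of P is positive
  have hNpos : 0 < orderOf P := by
    obtain ⟨u, hu⟩ := hPu
    rw [← hu, orderOf_units]
    exact orderOf_pos u
  -- key for subspaces
  have keyU : ∀ d : ℕ, U.map (P ^ d).vecMulLinear = U → P ^ d = 1 := by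
    intro d hmap
    apply key d v0 hv0U hv00
    rw [← hmap]
    exact ⟨v0, hv0U, rfl⟩
  have hinjOn : Set.InjOn (fun i : ℕ => U.map (P ^ i).vecMulLinear)
      ↑(Finset.range (orderOf P)) := by
    have hmain : ∀ i j : ℕ, i < j → j < orderOf P →
        U.map (P ^ i).vecMulLinear = U.map (P ^ j).vecMulLinear → False := by
      intro i j hlt hj hij
      have hle : i ≤ j := hlt.le
      have hcomp : U.map (P ^ j).vecMulLinear
          = (U.map (P ^ (j - i)).vecMulLinear).map (P ^ i).vecMulLinear := by
        rw [← Submodule.map_comp]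
        congr 1
        apply LinearMap.ext
        intro v
        simp [Matrix.vecMulLinear_apply, Matrix.vecMul_vecMul, ← pow_add,
          Nat.sub_add_cancel hle]
      have hUU : U.map (P ^ (j - i)).vecMulLinear = U := by
        apply Submodule.map_injective_of_injective (hinj _ (hPu.pow i))
        rw [← hcomp]
        exact hij.symm
      have h1 : P ^ (j - i) = 1 := keyU _ hUU
      have : orderOf P ≤ j - i := orderOf_le_of_pow_eq_one (by omega) h1
      omega
    intro i hi j hj hij
    simp only [Finset.coe_range, Set.mem_Iio] at hi hj
    dsimp only at hij
    rcases lt_trichotomy i j with h | h | h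
    · exact (hmain i j h hj hij).elim
    · exact h
    · exact (hmain j i h hi hij.symm).elim
  have hset : {W : Submodule K (Fin n → K) | ∃ i : ℕ, W = U.map (P ^ i).vecMulLinear}
      = (fun i : ℕ => U.map (P ^ i).vecMulLinear) '' ↑(Finset.range (orderOf P)) := by
    ext W
    simp only [Set.mem_setOf_eq, Set.mem_image, Finset.coe_range, Set.mem_Iio]
    constructor
    · rintro ⟨i, rfl⟩
      exact ⟨i % orderOf P, Nat.mod_lt _ hNpos, by rw [pow_mod_orderOf]⟩
    · rintro ⟨i, _, rfl⟩
      exact ⟨i, rfl⟩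
  refine ⟨part1, ?_, ?_⟩
  · intro i hne
    rw [part1 i hne, finrank_bot]
    omega
  · rw [Nat.card_coe_set_eq, hset, Set.ncard_image_of_injOn hinjOn,
      Set.ncard_coe_finset, Finset.card_range]
end

section
/- Let α be a primitive element of F_{q^n}, and U ⊆ F_{q^n} an F_q-subspace of dimension k whose nonzero elements are α^{b_1}, ..., α^{b_{q^k-1}}. If every value in the multiset {b_m - b_l mod q^n - 1 : l ≠ m} occurs with multiplicity at most q^d - 1 (for some d < k), then for all j ≢ 0 mod q^n - 1, dim(U ∩ α^j U) ≤ d; hence the orbit code {α^j U : j = 0,...,q^n-2} has minimum subspace distance at least 2k - 2d. -/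
/-- If in the subspace `U` every nonzero "quotient" `α^j` (with `j ≢ 0 mod q^n - 1`)
occurs for at most `q^d - 1` ordered pairs of nonzero elements of `U`, then
`dim(U ∩ α^j U) ≤ d` for all such `j`; hence the orbit code `{α^j U}` has minimum
subspace distance at least `2k - 2d`. -/
theorem primitive_orbit_code_distance_bound
    {K L : Type*} [Field K] [Fintype K] [Field L] [Fintype L] [Algebra K L]
    (q n k d : ℕ) (hq : Fintype.card K = q) (hn : Module.finrank K L = n)
    (α : Lˣ) (hα : ∀ x : Lˣ, x ∈ Subgroup.zpowers α)
    (U : Submodule K L) (hU : Module.finrank K ↥U = k) (hd : d < k)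
    (hmult : ∀ j : ℕ, ¬ (q ^ n - 1) ∣ j →
      Nat.card {p : L × L // p.1 ∈ U ∧ p.2 ∈ U ∧ p.1 ≠ 0 ∧ p.2 = (α : L) ^ j * p.1}
        ≤ q ^ d - 1) :
    ∀ j : ℕ, ¬ (q ^ n - 1) ∣ j →
      Module.finrank K ↥(U ⊓ U.map (LinearMap.mulLeft K ((α : L) ^ j))) ≤ d ∧
      2 * k - 2 * d
        ≤ 2 * (k - Module.finrank K ↥(U ⊓ U.map (LinearMap.mulLeft K ((α : L) ^ j)))) := by
  classical
  intro j hj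
  have hq2 : 1 < q := hq ▸ Fintype.one_lt_card
  set W : Submodule K L := U ⊓ U.map (LinearMap.mulLeft K ((α : L) ^ j)) with hWdef
  set r : ℕ := Module.finrank K ↥W with hr
  have hαj : ((α : L) ^ j) ≠ 0 := pow_ne_zero _ (Units.ne_zero α)
  -- bijection between the pair set and nonzero elements of W
  have e : {p : L × L // p.1 ∈ U ∧ p.2 ∈ U ∧ p.1 ≠ 0 ∧ p.2 = (α : L) ^ j * p.1}
      ≃ {x : ↥W // ¬ x = 0} :=
    { toFun := fun p => ⟨⟨p.1.2, p.2.2.1,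
        Submodule.mem_map.2 ⟨p.1.1, p.2.1, p.2.2.2.2.symm⟩⟩, by
          intro h
          apply p.2.2.2.1
          have h2 : p.1.2 = 0 := by
            simpa using congrArg (Subtype.val) h
          have := p.2.2.2.2
          rw [h2] at this
          exact (mul_eq_zero.1 this.symm).resolve_left hαj⟩
      invFun := fun x => ⟨(((α : L) ^ j)⁻¹ * x.1.1, x.1.1), by
          obtain ⟨u, hu, hux⟩ := Submodule.mem_map.1 x.1.2.2
          have hux' : (α : L) ^ j * u = x.1.1 := hux
          refine ⟨?_, x.1.2.1, ?_, ?_⟩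
          · have : (((α : L) ^ j)⁻¹ * x.1.1) = u := by
              rw [← hux', inv_mul_cancel_left₀ hαj]
            rw [this]; exact hu
          · intro h0
            apply x.2
            apply Subtype.ext
            have : x.1.1 = 0 := by
              have := congrArg (fun y => (α : L) ^ j * y) h0
              simpa [mul_inv_cancel_left₀ hαj] using this
            simpa using this
          · rw [mul_inv_cancel_left₀ hαj]⟩
      left_inv := fun p => by
        apply Subtype.ext
        apply Prod.ext
        · show ((α : L) ^ j)⁻¹ * p.1.2 = p.1.1
          rw [p.2.2.2.2, inv_mul_cancel_left₀ hαj]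
        · rfl
      right_inv := fun x => by
        apply Subtype.ext
        rfl }
  have hfin : Fintype ↥W := Fintype.ofFinite _
  have hcardW : Fintype.card ↥W = q ^ r := by
    rw [← hq]
    exact Module.card_eq_pow_finrank
  have hcard1 : Nat.card {x : ↥W // ¬ x = 0} = q ^ r - 1 := by
    rw [Nat.card_eq_fintype_card, Fintype.card_subtype_compl,
      Fintype.card_subtype_eq (0 : ↥W), hcardW]
  have hle : q ^ r - 1 ≤ q ^ d - 1 := by
    rw [← hcard1, ← Nat.card_eq_of_bijective e e.bijective]
    exact hmult j hj
  have hrd : r ≤ d := by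
    have h1 : (1:ℕ) ≤ q ^ r := Nat.one_le_pow _ _ (by omega)
    have h2 : (1:ℕ) ≤ q ^ d := Nat.one_le_pow _ _ (by omega)
    have : q ^ r ≤ q ^ d := by omega
    exact (Nat.pow_le_pow_iff_right hq2).1 this
  exact ⟨hrd, by omega⟩
end
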